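/- Let C and D be finitely based permutation classes. Then the 2×2 grid class Grid(C,D; Av(12),Av(21)), whose top row is (C, D), whose bottom-left cell is decreasing and whose bottom-right cell is increasing, is finitely based. -/

import Mathlib

/-!
For a vertical line `v`, the top cells lie in `C`, `D` exactly above the horizontal lines
`topLeftMin v`, `topRightMin v`, and the bottom cells are decreasing, increasing exactly below
`botLeftMax v`, `botRightMax v`; so `π` is in the grid class iff at some `v` both minima lie below
both maxima. Giving each half its own horizontal line, the left one below (above) the right one,
yields `SquintLE` (`SquintGE`). As `topLeftMin`, `botRightMax` increase and `topRightMin`,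
`botLeftMax` decrease with `v`, a discrete intermediate value argument shows that the grid class is
`SquintLE ∩ SquintGE`, and reversal exchanges the two squint classes.

If `π ∉ SquintLE`, the vertical lines fall into a left range, a right range and a band between
them, each ruled out by at most two gadgets: a basis element of `C` or `D` together with a `12` or
a `21`. The pattern of these boundedly many entries already lies outside `SquintLE`, so
`SquintLE` is finitely based.
-/

/-- A permutation of length `n`, given as a bijection of `Fin n`
(index/value `i` represents the entry `i+1` of `{1,…,n}`). -/
abbrev Perm' := Σ n : ℕ, Equiv.Perm (Fin n)

/-- `Contains σ π` means the pattern `σ` is contained in `π`. -/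
def Contains (σ π : Perm') : Prop :=
  ∃ f : Fin σ.1 → Fin π.1, StrictMono f ∧
    ∀ i j : Fin σ.1, σ.2 i < σ.2 j ↔ π.2 (f i) < π.2 (f j)

/-- A permutation class: a downward-closed set of permutations. -/
def IsPermClass (X : Set Perm') : Prop :=
  ∀ π ∈ X, ∀ σ : Perm', Contains σ π → σ ∈ X

/-- The avoidance set of a set `B` of permutations. -/
def Av (B : Set Perm') : Set Perm' := {π | ∀ β ∈ B, ¬ Contains β π}

/-- A set of permutations is finitely based if it is `Av B` for a finite `B`. -/
def FinitelyBased (X : Set Perm') : Prop := ∃ B : Set Perm', B.Finite ∧ X = Av B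

/-- `PatternOn π S σ`: the entries of `π` at the set `S` of indices form a copy of `σ`. -/
def PatternOn (π : Perm') (S : Set (Fin π.1)) (σ : Perm') : Prop :=
  ∃ f : Fin σ.1 → Fin π.1, StrictMono f ∧ Set.range f = S ∧
    ∀ i j : Fin σ.1, σ.2 i < σ.2 j ↔ π.2 (f i) < π.2 (f j)

/-- `PatternIn π S X`: the pattern of the entries of `π` at positions `S` lies in `X`. -/
def PatternIn (π : Perm') (S : Set (Fin π.1)) (X : Set Perm') : Prop :=
  ∃ σ ∈ X, PatternOn π S σ

/-- The permutation 21. -/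
def perm21 : Perm' := ⟨2, Equiv.swap 0 1⟩
/-- The permutation 12. -/
def perm12 : Perm' := ⟨2, Equiv.refl (Fin 2)⟩
/-- The empty permutation. -/
def emptyPerm : Perm' := ⟨0, Equiv.refl (Fin 0)⟩

/-- The 2×2 grid class `Grid(A,B;C,D)`: `A` top-left, `B` top-right, `C` bottom-left,
`D` bottom-right.  A position `i : Fin n` represents position `i+1`, so "position `≤ v`"
is `(i:ℕ) < v`, and "value `> h`" is `h ≤ (π.2 i : ℕ)`. -/
def GridClass (A B C D : Set Perm') : Set Perm' :=
  {π | ∃ v h : ℕ, v ≤ π.1 ∧ h ≤ π.1 ∧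
    PatternIn π {i | (i : ℕ) < v ∧ h ≤ (π.2 i : ℕ)} A ∧
    PatternIn π {i | v ≤ (i : ℕ) ∧ h ≤ (π.2 i : ℕ)} B ∧
    PatternIn π {i | (i : ℕ) < v ∧ (π.2 i : ℕ) < h} C ∧
    PatternIn π {i | v ≤ (i : ℕ) ∧ (π.2 i : ℕ) < h} D}

/-- Horizontal juxtaposition of `X` (left) and `Y` (right). -/
def HJuxt (X Y : Set Perm') : Set Perm' :=
  {π | ∃ v : ℕ, v ≤ π.1 ∧
    PatternIn π {i | (i : ℕ) < v} X ∧
    PatternIn π {i | v ≤ (i : ℕ)} Y}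

/-- Vertical juxtaposition of `X` (top) and `Y` (bottom). -/
def VJuxt (X Y : Set Perm') : Set Perm' :=
  {π | ∃ h : ℕ, h ≤ π.1 ∧
    PatternIn π {i | h ≤ (π.2 i : ℕ)} X ∧
    PatternIn π {i | (π.2 i : ℕ) < h} Y}

/-- `Squint≤(A,B;C,D)`: divisions `(v, ℓ, r)` with the left h-line `ℓ` no higher
than the right h-line `r`. -/
def SquintLE (A B C D : Set Perm') : Set Perm' :=
  {π | ∃ v l r : ℕ, v ≤ π.1 ∧ l ≤ π.1 ∧ r ≤ π.1 ∧ l ≤ r ∧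
    PatternIn π {i | (i : ℕ) < v ∧ l ≤ (π.2 i : ℕ)} A ∧
    PatternIn π {i | (i : ℕ) < v ∧ (π.2 i : ℕ) < l} C ∧
    PatternIn π {i | v ≤ (i : ℕ) ∧ r ≤ (π.2 i : ℕ)} B ∧
    PatternIn π {i | v ≤ (i : ℕ) ∧ (π.2 i : ℕ) < r} D}

/-- `Squint≥(A,B;C,D)`: divisions `(v, ℓ, r)` with the left h-line `ℓ` no lower
than the right h-line `r`. -/
def SquintGE (A B C D : Set Perm') : Set Perm' :=
  {π | ∃ v l r : ℕ, v ≤ π.1 ∧ l ≤ π.1 ∧ r ≤ π.1 ∧ r ≤ l ∧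
    PatternIn π {i | (i : ℕ) < v ∧ l ≤ (π.2 i : ℕ)} A ∧
    PatternIn π {i | (i : ℕ) < v ∧ (π.2 i : ℕ) < l} C ∧
    PatternIn π {i | v ≤ (i : ℕ) ∧ r ≤ (π.2 i : ℕ)} B ∧
    PatternIn π {i | v ≤ (i : ℕ) ∧ (π.2 i : ℕ) < r} D}

/-- The basis of a set `X`: minimal permutations not in `X`. -/
def PermBasis (X : Set Perm') : Set Perm' :=
  {π | π ∉ X ∧ ∀ σ : Perm', Contains σ π → σ ≠ π → σ ∈ X}

open Set

lemma Contains.trans {ρ σ π : Perm'} (h₁ : Contains ρ σ) (h₂ : Contains σ π) : Contains ρ π := by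
  obtain ⟨f, hf, hfi⟩ := h₁
  obtain ⟨g, hg, hgi⟩ := h₂
  exact ⟨g ∘ f, hg.comp hf, fun i j => (hfi i j).trans (hgi (f i) (f j))⟩

lemma contains_emptyPerm (π : Perm') : Contains emptyPerm π :=
  ⟨fun i => i.elim0, fun i => i.elim0, fun i => i.elim0⟩

lemma isPermClass_av (B : Set Perm') : IsPermClass (Av B) :=
  fun _ hπ _ hσ β hβ hc => hπ β hβ (hc.trans hσ)

lemma IsPermClass.eq_empty {X : Set Perm'} (hX : IsPermClass X) (h : emptyPerm ∉ X) : X = ∅ :=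
  eq_empty_of_forall_notMem fun π hπ => h (hX π hπ _ (contains_emptyPerm π))

lemma emptyPerm_mem_av_singleton {β : Perm'} (hβ : 0 < β.1) : emptyPerm ∈ Av {β} := by
  rintro _ rfl ⟨f, -⟩
  exact (f ⟨0, hβ⟩).elim0

lemma av_union (B₁ B₂ : Set Perm') : Av (B₁ ∪ B₂) = Av B₁ ∩ Av B₂ := by
  ext π
  simp only [Av, mem_union, mem_inter_iff, mem_ofPred_eq, or_imp, forall_and]

lemma PatternOn.contains {π σ : Perm'} {S : Set (Fin π.1)} (h : PatternOn π S σ) :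
    Contains σ π :=
  let ⟨f, hf, _, hfi⟩ := h
  ⟨f, hf, hfi⟩

lemma exists_patternOn (π : Perm') (S : Set (Fin π.1)) :
    ∃ σ : Perm', σ.1 = S.ncard ∧ PatternOn π S σ := by
  classical
  set s := S.toFinset
  let e := s.orderEmbOfFin rfl
  let f : Fin s.card → Fin π.1 := fun i => π.2 (e i)
  have hf : Function.Injective f := π.2.injective.comp e.injective
  let τ := Tuple.sort f
  -- `f ∘ τ` is sorted, so `τ⁻¹` records the relative order of the values of `f`
  have hsorted : StrictMono (f ∘ τ) :=
    (Tuple.monotone_sort f).strictMono_of_injective (hf.comp τ.injective)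
  refine ⟨⟨s.card, τ.symm⟩, by rw [ncard_eq_toFinset_card'], e, e.strictMono, ?_, fun i j => ?_⟩
  · simp [e, s]
  · simpa [f] using (hsorted.lt_iff_lt (a := τ.symm i) (b := τ.symm j)).symm

/-- Like `PatternOn`, except that the copy of `β` need only lie inside `S`. -/
def CopyOn (π β : Perm') (S : Set (Fin π.1)) : Prop :=
  ∃ g : Fin β.1 → Fin π.1, StrictMono g ∧ (∀ i, g i ∈ S) ∧
    ∀ i j, β.2 i < β.2 j ↔ π.2 (g i) < π.2 (g j)

lemma CopyOn.mono {π β : Perm'} {S T : Set (Fin π.1)} (h : CopyOn π β S) (hST : S ⊆ T) :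
    CopyOn π β T :=
  let ⟨g, hg, hgS, hgi⟩ := h
  ⟨g, hg, fun i => hST (hgS i), hgi⟩

lemma CopyOn.exists_finset {π β : Perm'} {S : Set (Fin π.1)} (h : CopyOn π β S) :
    ∃ G : Finset (Fin π.1), G.card ≤ β.1 ∧ CopyOn π β (↑G ∩ S) := by
  classical
  obtain ⟨g, hg, hgS, hgi⟩ := h
  refine ⟨Finset.univ.image g, ?_, g, hg, fun i => ⟨by simp, hgS i⟩, hgi⟩
  simpa using Finset.card_image_le (s := Finset.univ) (f := g)

lemma PatternOn.copyOn_iff {π σ β : Perm'} {S : Set (Fin π.1)} (h : PatternOn π S σ) :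
    CopyOn π β S ↔ Contains β σ := by
  obtain ⟨e, he, rfl, hei⟩ := h
  constructor
  · rintro ⟨g, hg, hgS, hgi⟩
    choose k hk using hgS
    refine ⟨k, fun i j hij => ?_, fun i j => ?_⟩
    · exact he.lt_iff_lt.mp (by rw [hk, hk]; exact hg hij)
    · rw [hgi, ← hk, ← hk, hei]
  · rintro ⟨k, hk, hki⟩
    exact ⟨e ∘ k, he.comp hk, fun i => mem_range_self _, fun i j => (hki i j).trans (hei _ _)⟩

lemma patternIn_av_iff {π : Perm'} {S : Set (Fin π.1)} {B : Set Perm'} :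
    PatternIn π S (Av B) ↔ ∀ β ∈ B, ¬ CopyOn π β S := by
  constructor
  · rintro ⟨σ, hσ, hS⟩ β hβ hc
    exact hσ β hβ (hS.copyOn_iff.mp hc)
  · intro h
    obtain ⟨σ, -, hS⟩ := exists_patternOn π S
    exact ⟨σ, fun β hβ hc => h β hβ (hS.copyOn_iff.mpr hc), hS⟩

lemma exists_copyOn_of_not_patternIn {π : Perm'} {S : Set (Fin π.1)} {B : Set Perm'}
    (h : ¬ PatternIn π S (Av B)) : ∃ β ∈ B, CopyOn π β S := by
  simpa only [patternIn_av_iff, not_forall, not_not, exists_prop] using h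

lemma PatternOn.copyOn {π σ : Perm'} {S : Set (Fin π.1)} (h : PatternOn π S σ) :
    CopyOn π σ S :=
  let ⟨e, he, hrange, hei⟩ := h
  ⟨e, he, fun i => hrange ▸ mem_range_self i, hei⟩

lemma PatternOn.image {π ρ σ : Perm'} {f : Fin ρ.1 → Fin π.1} (hf : StrictMono f)
    (hfi : ∀ i j, ρ.2 i < ρ.2 j ↔ π.2 (f i) < π.2 (f j)) {T : Set (Fin ρ.1)}
    (h : PatternOn ρ T σ) : PatternOn π (f '' T) σ := by
  obtain ⟨e, he, rfl, hei⟩ := h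
  exact ⟨f ∘ e, hf.comp he, range_comp f e, fun i j => (hei i j).trans (hfi _ _)⟩

lemma PatternIn.image {π ρ : Perm'} {f : Fin ρ.1 → Fin π.1} (hf : StrictMono f)
    (hfi : ∀ i j, ρ.2 i < ρ.2 j ↔ π.2 (f i) < π.2 (f j)) {T : Set (Fin ρ.1)} {X : Set Perm'}
    (h : PatternIn ρ T X) : PatternIn π (f '' T) X :=
  let ⟨σ, hσ, hT⟩ := h
  ⟨σ, hσ, hT.image hf hfi⟩

lemma PatternIn.preimage {π ρ : Perm'} {f : Fin ρ.1 → Fin π.1} (hf : StrictMono f)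
    (hfi : ∀ i j, ρ.2 i < ρ.2 j ↔ π.2 (f i) < π.2 (f j)) {S : Set (Fin π.1)} {X : Set Perm'}
    (hX : IsPermClass X) (h : PatternIn π S X) : PatternIn ρ (f ⁻¹' S) X := by
  obtain ⟨τ, hτ, hS⟩ := h
  obtain ⟨τ', -, hS'⟩ := exists_patternOn ρ (f ⁻¹' S)
  have hcopy : CopyOn π τ' S :=
    ((hS'.image hf hfi).copyOn).mono (image_preimage_subset f S)
  exact ⟨τ', hX τ hτ τ' (hS.copyOn_iff.mp hcopy), hS'⟩

lemma PatternIn.subset {π : Perm'} {S T : Set (Fin π.1)} {X : Set Perm'} (hX : IsPermClass X)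
    (h : PatternIn π T X) (hST : S ⊆ T) : PatternIn π S X := by
  obtain ⟨τ, hτ, hT⟩ := h
  obtain ⟨τ', -, hS⟩ := exists_patternOn π S
  exact ⟨τ', hX τ hτ τ' (hT.copyOn_iff.mp (hS.copyOn.mono hST)), hS⟩

lemma patternIn_of_eq_empty {π : Perm'} {S : Set (Fin π.1)} {X : Set Perm'}
    (hX : emptyPerm ∈ X) (hS : S = ∅) : PatternIn π S X := by
  refine ⟨emptyPerm, hX, fun i => i.elim0, fun i => i.elim0, ?_, fun i => i.elim0⟩
  rw [hS, range_eq_empty_iff]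
  exact inferInstanceAs (IsEmpty (Fin 0))

lemma copyOn_perm12_iff {π : Perm'} {S : Set (Fin π.1)} :
    CopyOn π perm12 S ↔ ∃ i ∈ S, ∃ j ∈ S, i < j ∧ π.2 i < π.2 j := by
  constructor
  · rintro ⟨g, hg, hgS, hgi⟩
    exact ⟨g (0 : Fin 2), hgS _, g (1 : Fin 2), hgS _, hg (by decide),
      (hgi (0 : Fin 2) (1 : Fin 2)).mp (by decide)⟩
  · rintro ⟨i, hi, j, hj, hij, hv⟩
    refine ⟨![i, j], strictMono_vecEmpty.vecCons hij, fun a => ?_, ?_⟩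
    · fin_cases a <;> simpa
    · show ∀ a b : Fin 2, a < b ↔ π.2 (![i, j] a) < π.2 (![i, j] b)
      intro a b
      fin_cases a <;> fin_cases b <;> simp [hv, hv.le]

lemma copyOn_perm21_iff {π : Perm'} {S : Set (Fin π.1)} :
    CopyOn π perm21 S ↔ ∃ i ∈ S, ∃ j ∈ S, i < j ∧ π.2 j < π.2 i := by
  constructor
  · rintro ⟨g, hg, hgS, hgi⟩
    exact ⟨g (0 : Fin 2), hgS _, g (1 : Fin 2), hgS _, hg (by decide),
      (hgi (1 : Fin 2) (0 : Fin 2)).mp (by decide)⟩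
  · rintro ⟨i, hi, j, hj, hij, hv⟩
    refine ⟨![i, j], strictMono_vecEmpty.vecCons hij, fun a => ?_, ?_⟩
    · fin_cases a <;> simpa
    · show ∀ a b : Fin 2, Equiv.swap 0 1 a < Equiv.swap 0 1 b ↔ π.2 (![i, j] a) < π.2 (![i, j] b)
      intro a b
      fin_cases a <;> fin_cases b <;> simp [hv, hv.le]

lemma emptyPerm_mem_av_perm12 : emptyPerm ∈ Av {perm12} := emptyPerm_mem_av_singleton two_pos

lemma emptyPerm_mem_av_perm21 : emptyPerm ∈ Av {perm21} := emptyPerm_mem_av_singleton two_pos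

lemma sInf_le_iff_of_monotone {P : ℕ → Prop} (hP : Monotone P) (hne : ∃ n, P n) {h : ℕ} :
    sInf {h | P h} ≤ h ↔ P h :=
  ⟨fun hle => hP hle (Nat.sInf_mem hne), fun hh => Nat.sInf_le hh⟩

lemma le_sSup_iff_of_antitone {P : ℕ → Prop} (hP : Antitone P) (h0 : P 0) {n h : ℕ}
    (hh : h ≤ n) : h ≤ sSup {h | h ≤ n ∧ P h} ↔ P h :=
  ⟨fun hle => hP hle (Nat.sSup_mem (s := {h | h ≤ n ∧ P h}) ⟨0, Nat.zero_le _, h0⟩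
    ⟨n, fun _ hx => hx.1⟩).2,
    fun hh' => le_csSup ⟨n, fun _ hx => hx.1⟩ ⟨hh, hh'⟩⟩

section Cells

/-! The four cells cut out of `π` by the vertical line after position `v` and the
horizontal line below value `h`, exactly as in `GridClass`. -/

def cellTL (π : Perm') (v h : ℕ) : Set (Fin π.1) := {i | (i : ℕ) < v ∧ h ≤ (π.2 i : ℕ)}
def cellBL (π : Perm') (v h : ℕ) : Set (Fin π.1) := {i | (i : ℕ) < v ∧ (π.2 i : ℕ) < h}
def cellTR (π : Perm') (v h : ℕ) : Set (Fin π.1) := {i | v ≤ (i : ℕ) ∧ h ≤ (π.2 i : ℕ)}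
def cellBR (π : Perm') (v h : ℕ) : Set (Fin π.1) := {i | v ≤ (i : ℕ) ∧ (π.2 i : ℕ) < h}

variable {π : Perm'} {v v' h h' : ℕ}

lemma cellTL_subset (hv : v ≤ v') (hh : h' ≤ h) : cellTL π v h ⊆ cellTL π v' h' :=
  fun _ hi => ⟨hi.1.trans_le hv, hh.trans hi.2⟩

lemma cellBL_subset (hv : v ≤ v') (hh : h ≤ h') : cellBL π v h ⊆ cellBL π v' h' :=
  fun _ hi => ⟨hi.1.trans_le hv, hi.2.trans_le hh⟩

lemma cellTR_subset (hv : v' ≤ v) (hh : h' ≤ h) : cellTR π v h ⊆ cellTR π v' h' :=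
  fun _ hi => ⟨hv.trans hi.1, hh.trans hi.2⟩

lemma cellBR_subset (hv : v' ≤ v) (hh : h ≤ h') : cellBR π v h ⊆ cellBR π v' h' :=
  fun _ hi => ⟨hv.trans hi.1, hi.2.trans_le hh⟩

lemma cellTL_zero_left : cellTL π 0 h = ∅ :=
  eq_empty_of_forall_notMem fun _ hi => Nat.not_lt_zero _ hi.1

lemma cellTL_card_right : cellTL π v π.1 = ∅ :=
  eq_empty_of_forall_notMem fun i hi => (π.2 i).is_lt.not_ge hi.2

lemma cellBL_zero_right : cellBL π v 0 = ∅ :=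
  eq_empty_of_forall_notMem fun _ hi => Nat.not_lt_zero _ hi.2

lemma cellTR_card_left : cellTR π π.1 h = ∅ :=
  eq_empty_of_forall_notMem fun i hi => i.is_lt.not_ge hi.1

lemma cellTR_card_right : cellTR π v π.1 = ∅ :=
  eq_empty_of_forall_notMem fun i hi => (π.2 i).is_lt.not_ge hi.2

lemma cellBR_zero_right : cellBR π v 0 = ∅ :=
  eq_empty_of_forall_notMem fun _ hi => Nat.not_lt_zero _ hi.2

lemma cellBR_card_left : cellBR π π.1 h = ∅ :=
  eq_empty_of_forall_notMem fun i hi => i.is_lt.not_ge hi.1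

end Cells

section Thresholds

/-! For a vertical line `v`, the lowest horizontal line for which the top cell on either side lies
in its class, and the highest one for which the bottom cell on either side does. -/

noncomputable def topLeftMin (π : Perm') (A : Set Perm') (v : ℕ) : ℕ :=
  sInf {h | PatternIn π (cellTL π v h) A}

noncomputable def topRightMin (π : Perm') (B : Set Perm') (v : ℕ) : ℕ :=
  sInf {h | PatternIn π (cellTR π v h) B}

noncomputable def botLeftMax (π : Perm') (C : Set Perm') (v : ℕ) : ℕ :=
  sSup {h | h ≤ π.1 ∧ PatternIn π (cellBL π v h) C}

noncomputable def botRightMax (π : Perm') (D : Set Perm') (v : ℕ) : ℕ :=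
  sSup {h | h ≤ π.1 ∧ PatternIn π (cellBR π v h) D}

variable {π : Perm'} {A B C D : Set Perm'} {v h : ℕ}

lemma patternIn_cellTL_iff (hA : IsPermClass A) (hAe : emptyPerm ∈ A) :
    PatternIn π (cellTL π v h) A ↔ topLeftMin π A v ≤ h :=
  (sInf_le_iff_of_monotone (P := fun h => PatternIn π (cellTL π v h) A)
    (fun _ _ hh H => H.subset hA (cellTL_subset le_rfl hh))
    ⟨π.1, patternIn_of_eq_empty hAe cellTL_card_right⟩).symm

lemma patternIn_cellTR_iff (hB : IsPermClass B) (hBe : emptyPerm ∈ B) :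
    PatternIn π (cellTR π v h) B ↔ topRightMin π B v ≤ h :=
  (sInf_le_iff_of_monotone (P := fun h => PatternIn π (cellTR π v h) B)
    (fun _ _ hh H => H.subset hB (cellTR_subset le_rfl hh))
    ⟨π.1, patternIn_of_eq_empty hBe cellTR_card_right⟩).symm

lemma patternIn_cellBL_iff (hC : IsPermClass C) (hCe : emptyPerm ∈ C) (hh : h ≤ π.1) :
    PatternIn π (cellBL π v h) C ↔ h ≤ botLeftMax π C v :=
  (le_sSup_iff_of_antitone (P := fun h => PatternIn π (cellBL π v h) C)
    (fun _ _ hh H => H.subset hC (cellBL_subset le_rfl hh))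
    (patternIn_of_eq_empty hCe cellBL_zero_right) hh).symm

lemma patternIn_cellBR_iff (hD : IsPermClass D) (hDe : emptyPerm ∈ D) (hh : h ≤ π.1) :
    PatternIn π (cellBR π v h) D ↔ h ≤ botRightMax π D v :=
  (le_sSup_iff_of_antitone (P := fun h => PatternIn π (cellBR π v h) D)
    (fun _ _ hh H => H.subset hD (cellBR_subset le_rfl hh))
    (patternIn_of_eq_empty hDe cellBR_zero_right) hh).symm

lemma topLeftMin_le_card (hAe : emptyPerm ∈ A) : topLeftMin π A v ≤ π.1 :=
  Nat.sInf_le (patternIn_of_eq_empty hAe cellTL_card_right)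

lemma topRightMin_le_card (hBe : emptyPerm ∈ B) : topRightMin π B v ≤ π.1 :=
  Nat.sInf_le (patternIn_of_eq_empty hBe cellTR_card_right)

lemma botLeftMax_le_card : botLeftMax π C v ≤ π.1 :=
  csSup_le' fun _ hx => hx.1

lemma botRightMax_le_card : botRightMax π D v ≤ π.1 :=
  csSup_le' fun _ hx => hx.1

lemma topLeftMin_mono (hA : IsPermClass A) (hAe : emptyPerm ∈ A) : Monotone (topLeftMin π A) :=
  fun _ _ hv => (patternIn_cellTL_iff hA hAe).mp
    (((patternIn_cellTL_iff hA hAe).mpr le_rfl).subset hA (cellTL_subset hv le_rfl))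

lemma topRightMin_anti (hB : IsPermClass B) (hBe : emptyPerm ∈ B) :
    Antitone (topRightMin π B) :=
  fun _ _ hv => (patternIn_cellTR_iff hB hBe).mp
    (((patternIn_cellTR_iff hB hBe).mpr le_rfl).subset hB (cellTR_subset hv le_rfl))

lemma botLeftMax_anti (hC : IsPermClass C) (hCe : emptyPerm ∈ C) :
    Antitone (botLeftMax π C) :=
  fun _ _ hv => (patternIn_cellBL_iff hC hCe botLeftMax_le_card).mp
    (((patternIn_cellBL_iff hC hCe botLeftMax_le_card).mpr le_rfl).subset hC
      (cellBL_subset hv le_rfl))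

lemma botRightMax_mono (hD : IsPermClass D) (hDe : emptyPerm ∈ D) :
    Monotone (botRightMax π D) :=
  fun _ _ hv => (patternIn_cellBR_iff hD hDe botRightMax_le_card).mp
    (((patternIn_cellBR_iff hD hDe botRightMax_le_card).mpr le_rfl).subset hD
      (cellBR_subset hv le_rfl))

lemma topLeftMin_zero (hA : IsPermClass A) (hAe : emptyPerm ∈ A) : topLeftMin π A 0 = 0 :=
  Nat.le_zero.mp ((patternIn_cellTL_iff hA hAe).mp (patternIn_of_eq_empty hAe cellTL_zero_left))

lemma topRightMin_card (hB : IsPermClass B) (hBe : emptyPerm ∈ B) :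
    topRightMin π B π.1 = 0 :=
  Nat.le_zero.mp ((patternIn_cellTR_iff hB hBe).mp (patternIn_of_eq_empty hBe cellTR_card_left))

lemma botRightMax_card (hD : IsPermClass D) (hDe : emptyPerm ∈ D) :
    botRightMax π D π.1 = π.1 :=
  botRightMax_le_card.antisymm
    ((patternIn_cellBR_iff hD hDe le_rfl).mp (patternIn_of_eq_empty hDe cellBR_card_left))

end Thresholds

section Characterizations

variable {π : Perm'} {A B C D : Set Perm'}

lemma mem_gridClass_iff (hA : IsPermClass A) (hAe : emptyPerm ∈ A) (hB : IsPermClass B)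
    (hBe : emptyPerm ∈ B) (hC : IsPermClass C) (hCe : emptyPerm ∈ C) (hD : IsPermClass D)
    (hDe : emptyPerm ∈ D) :
    π ∈ GridClass A B C D ↔ ∃ v ≤ π.1,
      max (topLeftMin π A v) (topRightMin π B v) ≤ min (botLeftMax π C v) (botRightMax π D v) := by
  constructor
  · rintro ⟨v, h, hv, hh, hTL, hTR, hBL, hBR⟩
    exact ⟨v, hv, (max_le ((patternIn_cellTL_iff hA hAe).mp hTL)
      ((patternIn_cellTR_iff hB hBe).mp hTR)).trans (le_min
        ((patternIn_cellBL_iff hC hCe hh).mp hBL) ((patternIn_cellBR_iff hD hDe hh).mp hBR))⟩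
  · rintro ⟨v, hv, hle⟩
    have hh : max (topLeftMin π A v) (topRightMin π B v) ≤ π.1 :=
      max_le (topLeftMin_le_card hAe) (topRightMin_le_card hBe)
    exact ⟨v, _, hv, hh, (patternIn_cellTL_iff hA hAe).mpr (le_max_left _ _),
      (patternIn_cellTR_iff hB hBe).mpr (le_max_right _ _),
      (patternIn_cellBL_iff hC hCe hh).mpr (hle.trans (min_le_left _ _)),
      (patternIn_cellBR_iff hD hDe hh).mpr (hle.trans (min_le_right _ _))⟩

lemma mem_squintLE_iff (hA : IsPermClass A) (hAe : emptyPerm ∈ A) (hB : IsPermClass B)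
    (hBe : emptyPerm ∈ B) (hC : IsPermClass C) (hCe : emptyPerm ∈ C) (hD : IsPermClass D)
    (hDe : emptyPerm ∈ D) :
    π ∈ SquintLE A B C D ↔ ∃ v ≤ π.1, topLeftMin π A v ≤ botLeftMax π C v ∧
      topRightMin π B v ≤ botRightMax π D v ∧ topLeftMin π A v ≤ botRightMax π D v := by
  constructor
  · rintro ⟨v, l, r, hv, hl, hr, hlr, hTL, hBL, hTR, hBR⟩
    have htl := (patternIn_cellTL_iff hA hAe).mp hTL
    have hbr := (patternIn_cellBR_iff hD hDe hr).mp hBR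
    exact ⟨v, hv, htl.trans ((patternIn_cellBL_iff hC hCe hl).mp hBL),
      ((patternIn_cellTR_iff hB hBe).mp hTR).trans hbr, htl.trans (hlr.trans hbr)⟩
  · rintro ⟨v, hv, hAC, hBD, hAD⟩
    have hr : max (topLeftMin π A v) (topRightMin π B v) ≤ π.1 :=
      max_le (topLeftMin_le_card hAe) (topRightMin_le_card hBe)
    exact ⟨v, _, _, hv, topLeftMin_le_card hAe, hr, le_max_left _ _,
      (patternIn_cellTL_iff hA hAe).mpr le_rfl,
      (patternIn_cellBL_iff hC hCe (topLeftMin_le_card hAe)).mpr hAC,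
      (patternIn_cellTR_iff hB hBe).mpr (le_max_right _ _),
      (patternIn_cellBR_iff hD hDe hr).mpr (max_le hAD hBD)⟩

lemma mem_squintGE_iff (hA : IsPermClass A) (hAe : emptyPerm ∈ A) (hB : IsPermClass B)
    (hBe : emptyPerm ∈ B) (hC : IsPermClass C) (hCe : emptyPerm ∈ C) (hD : IsPermClass D)
    (hDe : emptyPerm ∈ D) :
    π ∈ SquintGE A B C D ↔ ∃ v ≤ π.1, topLeftMin π A v ≤ botLeftMax π C v ∧
      topRightMin π B v ≤ botRightMax π D v ∧ topRightMin π B v ≤ botLeftMax π C v := by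
  constructor
  · rintro ⟨v, l, r, hv, hl, hr, hrl, hTL, hBL, hTR, hBR⟩
    have htr := (patternIn_cellTR_iff hB hBe).mp hTR
    have hbl := (patternIn_cellBL_iff hC hCe hl).mp hBL
    exact ⟨v, hv, ((patternIn_cellTL_iff hA hAe).mp hTL).trans hbl,
      htr.trans ((patternIn_cellBR_iff hD hDe hr).mp hBR), htr.trans (hrl.trans hbl)⟩
  · rintro ⟨v, hv, hAC, hBD, hBC⟩
    have hl : max (topLeftMin π A v) (topRightMin π B v) ≤ π.1 :=
      max_le (topLeftMin_le_card hAe) (topRightMin_le_card hBe)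
    exact ⟨v, _, _, hv, hl, topRightMin_le_card hBe, le_max_right _ _,
      (patternIn_cellTL_iff hA hAe).mpr (le_max_left _ _),
      (patternIn_cellBL_iff hC hCe hl).mpr (max_le hAC hBC),
      (patternIn_cellTR_iff hB hBe).mpr le_rfl,
      (patternIn_cellBR_iff hD hDe (topRightMin_le_card hBe)).mpr hBD⟩

end Characterizations

lemma exists_mem_Icc_of_step {Φ Ψ : ℕ → Prop} {a b : ℕ} (hab : a ≤ b) (ha : Φ a)
    (hstep : ∀ v, a ≤ v → v < b → Φ v → Ψ v ∨ Φ (v + 1)) (hb : Φ b → Ψ b) :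
    ∃ v, a ≤ v ∧ v ≤ b ∧ Ψ v := by
  by_contra hne
  simp only [not_exists, not_and] at hne
  have hΦ : ∀ v, a ≤ v → v ≤ b → Φ v := by
    intro v hav
    induction v, hav using Nat.le_induction with
    | base => exact fun _ => ha
    | succ v hav ih =>
      intro hvb
      have hvb' := Nat.le_of_succ_le hvb
      exact (hstep v hav hvb (ih hvb')).resolve_left (hne v hav hvb')
  exact hne b hab le_rfl (hb (hΦ b hab le_rfl))

/-- Stepping from the line with `tl ≤ br` towards the one with `tr ≤ bl`, a failure of
`tr ≤ bl` at `v` forces `tl ≤ br` at `v + 1`, and symmetrically in the other direction. -/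
lemma exists_max_le_min {tl tr bl br : ℕ → ℕ} (htl : Monotone tl) (htr : Antitone tr)
    (hbl : Antitone bl) (hbr : Monotone br) {v₁ v₂ : ℕ}
    (h₁ : tl v₁ ≤ bl v₁ ∧ tr v₁ ≤ br v₁ ∧ tl v₁ ≤ br v₁)
    (h₂ : tl v₂ ≤ bl v₂ ∧ tr v₂ ≤ br v₂ ∧ tr v₂ ≤ bl v₂) :
    ∃ v ≤ max v₁ v₂, max (tl v) (tr v) ≤ min (bl v) (br v) := by
  simp only [max_le_iff, le_min_iff]
  rcases le_total v₁ v₂ with h | h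
  · have hL : ∀ v ≤ v₂, tl v ≤ bl v := fun v hv => (htl hv).trans (h₂.1.trans (hbl hv))
    have hR : ∀ v, v₁ ≤ v → tr v ≤ br v := fun v hv => (htr hv).trans (h₁.2.1.trans (hbr hv))
    obtain ⟨v, hv₁, hv₂, hTB, hBT⟩ := exists_mem_Icc_of_step (Φ := fun v => tl v ≤ br v)
      (Ψ := fun v => tl v ≤ br v ∧ tr v ≤ bl v) h h₁.2.2 (fun v hv₁ hv₂ hΦ => by
        refine (em _).imp (And.intro hΦ) fun hS => ?_
        exact (hL _ hv₂).trans ((hbl v.le_succ).trans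
          ((not_le.mp hS).le.trans ((hR v hv₁).trans (hbr v.le_succ)))))
      fun hΦ => ⟨hΦ, h₂.2.2⟩
    exact ⟨v, hv₂.trans (le_max_right _ _), ⟨hL v hv₂, hBT⟩, hTB, hR v hv₁⟩
  · have hL : ∀ v ≤ v₁, tl v ≤ bl v := fun v hv => (htl hv).trans (h₁.1.trans (hbl hv))
    have hR : ∀ v, v₂ ≤ v → tr v ≤ br v := fun v hv => (htr hv).trans (h₂.2.1.trans (hbr hv))
    obtain ⟨v, hv₁, hv₂, hBT, hTB⟩ := exists_mem_Icc_of_step (Φ := fun v => tr v ≤ bl v)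
      (Ψ := fun v => tr v ≤ bl v ∧ tl v ≤ br v) h h₂.2.2 (fun v hv₁ hv₂ hΦ => by
        refine (em _).imp (And.intro hΦ) fun hS => ?_
        exact (htr v.le_succ).trans ((hR v hv₁).trans
          ((not_le.mp hS).le.trans ((htl v.le_succ).trans (hL _ hv₂)))))
      fun hΦ => ⟨hΦ, h₁.2.2⟩
    exact ⟨v, hv₂.trans (le_max_left _ _), ⟨hL v hv₂, hBT⟩, hTB, hR v hv₁⟩

lemma gridClass_eq_squintLE_inter_squintGE {A B C D : Set Perm'} (hA : IsPermClass A)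
    (hAe : emptyPerm ∈ A) (hB : IsPermClass B) (hBe : emptyPerm ∈ B) (hC : IsPermClass C)
    (hCe : emptyPerm ∈ C) (hD : IsPermClass D) (hDe : emptyPerm ∈ D) :
    GridClass A B C D = SquintLE A B C D ∩ SquintGE A B C D := by
  ext π
  rw [mem_inter_iff, mem_gridClass_iff hA hAe hB hBe hC hCe hD hDe,
    mem_squintLE_iff hA hAe hB hBe hC hCe hD hDe, mem_squintGE_iff hA hAe hB hBe hC hCe hD hDe]
  constructor
  · rintro ⟨v, hv, h⟩
    simp only [max_le_iff, le_min_iff] at h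
    exact ⟨⟨v, hv, h.1.1, h.2.2, h.2.1⟩, ⟨v, hv, h.1.1, h.2.2, h.1.2⟩⟩
  · rintro ⟨⟨v₁, hv₁, h₁⟩, ⟨v₂, hv₂, h₂⟩⟩
    obtain ⟨v, hv, h⟩ := exists_max_le_min (topLeftMin_mono hA hAe) (topRightMin_anti hB hBe)
      (botLeftMax_anti hC hCe) (botRightMax_mono hD hDe) h₁ h₂
    exact ⟨v, hv.trans (max_le hv₁ hv₂), h⟩

lemma Fin.exists_cut_of_isLowerSet {k : ℕ} {s : Set (Fin k)} (hs : IsLowerSet s) :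
    ∃ v ≤ k, ∀ i : Fin k, (i : ℕ) < v ↔ i ∈ s := by
  by_cases hall : ∀ i, i ∈ s
  · exact ⟨k, le_rfl, fun i => iff_of_true i.is_lt (hall i)⟩
  push Not at hall
  obtain ⟨i₀, hi₀, hmin⟩ := wellFounded_lt.has_min {i | i ∉ s} hall
  refine ⟨i₀, i₀.is_lt.le, fun i => ⟨fun hi => by_contra fun h => hmin i h hi, fun hi => ?_⟩⟩
  exact lt_of_not_ge fun h => hi₀ (hs (Fin.le_def.mpr h) hi)

lemma StrictMono.exists_cut_preimage {k n : ℕ} {g : Fin k → Fin n} (hg : StrictMono g)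
    (w : ℕ) : ∃ v ≤ k, ∀ i : Fin k, (i : ℕ) < v ↔ (g i : ℕ) < w :=
  Fin.exists_cut_of_isLowerSet (s := {i | (g i : ℕ) < w}) fun _ _ hij hi =>
    lt_of_le_of_lt (Fin.le_def.mp (hg.monotone hij)) hi

lemma StrictMono.exists_cut_image {k n : ℕ} {g : Fin k → Fin n} (hg : StrictMono g) (v : ℕ) :
    ∃ w, ∀ i : Fin k, (g i : ℕ) < w ↔ (i : ℕ) < v := by
  by_cases hv : v < k
  · exact ⟨g ⟨v, hv⟩, fun i => hg.lt_iff_lt⟩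
  · exact ⟨n, fun i => iff_of_true (g i).is_lt (i.is_lt.trans_le (not_lt.mp hv))⟩

lemma strictMono_valueMap {σ π : Perm'} {f : Fin σ.1 → Fin π.1}
    (hfi : ∀ i j, σ.2 i < σ.2 j ↔ π.2 (f i) < π.2 (f j)) :
    StrictMono fun j => π.2 (f (σ.2.symm j)) :=
  fun j j' h => (hfi _ _).mp (by simpa using h)

lemma preimage_cells {σ π : Perm'} {f : Fin σ.1 → Fin π.1} {v w l m : ℕ}
    (hpos : ∀ i, (f i : ℕ) < w ↔ (i : ℕ) < v)
    (hval : ∀ i, (π.2 (f i) : ℕ) < m ↔ (σ.2 i : ℕ) < l) :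
    f ⁻¹' cellTL π w m = cellTL σ v l ∧ f ⁻¹' cellBL π w m = cellBL σ v l ∧
      f ⁻¹' cellTR π w m = cellTR σ v l ∧ f ⁻¹' cellBR π w m = cellBR σ v l := by
  refine ⟨?_, ?_, ?_, ?_⟩ <;> ext i <;>
    simp only [cellTL, cellBL, cellTR, cellBR, mem_preimage, mem_ofPred_eq, ← not_lt, hpos, hval]

/-- The conditions of `SquintLE` at the lines `(v, l, r)`, imposed only on the entries at `W`. -/
def SquintLEAt (π : Perm') (W : Set (Fin π.1)) (A B C D : Set Perm') (v l r : ℕ) : Prop :=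
  l ≤ r ∧ PatternIn π (W ∩ cellTL π v l) A ∧ PatternIn π (W ∩ cellBL π v l) C ∧
    PatternIn π (W ∩ cellTR π v r) B ∧ PatternIn π (W ∩ cellBR π v r) D

section SquintLEAt

variable {π : Perm'} {A B C D : Set Perm'}

lemma SquintLEAt.mono {W W' : Set (Fin π.1)} {v l r : ℕ} (hA : IsPermClass A)
    (hB : IsPermClass B) (hC : IsPermClass C) (hD : IsPermClass D)
    (h : SquintLEAt π W' A B C D v l r) (hW : W ⊆ W') : SquintLEAt π W A B C D v l r :=
  let ⟨hlr, hTL, hBL, hTR, hBR⟩ := h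
  ⟨hlr, hTL.subset hA (inter_subset_inter_left _ hW), hBL.subset hC (inter_subset_inter_left _ hW),
    hTR.subset hB (inter_subset_inter_left _ hW), hBR.subset hD (inter_subset_inter_left _ hW)⟩

lemma PatternOn.mem_squintLE_iff {σ : Perm'} {W : Set (Fin π.1)} (h : PatternOn π W σ)
    (hA : IsPermClass A) (hB : IsPermClass B) (hC : IsPermClass C) (hD : IsPermClass D) :
    σ ∈ SquintLE A B C D ↔ ∃ v l r, SquintLEAt π W A B C D v l r := by
  obtain ⟨f, hf, rfl, hfi⟩ := h
  have hvalues := strictMono_valueMap hfi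
  constructor
  · rintro ⟨v, l, r, -, -, -, hlr, hTL, hBL, hTR, hBR⟩
    obtain ⟨w, hw⟩ := hf.exists_cut_image v
    obtain ⟨ml, hml⟩ := hvalues.exists_cut_image l
    obtain ⟨mr, hmr⟩ := hvalues.exists_cut_image r
    have hr : ∀ i, (π.2 (f i) : ℕ) < mr ↔ (σ.2 i : ℕ) < r := fun i => by simpa using hmr (σ.2 i)
    -- `min ml mr` cuts the values of `σ` below `l` just as `ml` does, and lies below `mr`
    have hl : ∀ i, (π.2 (f i) : ℕ) < min ml mr ↔ (σ.2 i : ℕ) < l := fun i => by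
      rw [lt_min_iff, hr, show (π.2 (f i) : ℕ) < ml ↔ _ by simpa using hml (σ.2 i)]
      exact ⟨And.left, fun h => ⟨h, h.trans_le hlr⟩⟩
    obtain ⟨hTL', hBL', -, -⟩ := preimage_cells hw hl
    obtain ⟨-, -, hTR', hBR'⟩ := preimage_cells hw hr
    refine ⟨w, min ml mr, mr, min_le_right _ _, ?_, ?_, ?_, ?_⟩ <;>
      rw [← image_preimage_eq_range_inter]
    · exact hTL'.symm ▸ hTL.image hf hfi
    · exact hBL'.symm ▸ hBL.image hf hfi
    · exact hTR'.symm ▸ hTR.image hf hfi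
    · exact hBR'.symm ▸ hBR.image hf hfi
  · rintro ⟨w, m, m', hmm', hTL, hBL, hTR, hBR⟩
    obtain ⟨v, hv, hpos⟩ := hf.exists_cut_preimage w
    obtain ⟨l, hl, hml⟩ := hvalues.exists_cut_preimage m
    obtain ⟨r, hr, hmr⟩ := hvalues.exists_cut_preimage m'
    have hlr : l ≤ r := by
      by_contra! hrl
      exact lt_irrefl _ ((hmr ⟨r, hrl.trans_le hl⟩).mpr (((hml _).mp hrl).trans_le hmm'))
    obtain ⟨hTL', hBL', -, -⟩ :=
      preimage_cells (fun i => (hpos i).symm) fun i => by simpa using (hml (σ.2 i)).symm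
    obtain ⟨-, -, hTR', hBR'⟩ :=
      preimage_cells (fun i => (hpos i).symm) fun i => by simpa using (hmr (σ.2 i)).symm
    refine ⟨v, l, r, hv, hl, hr, hlr, ?_, ?_, ?_, ?_⟩
    · change PatternIn σ (cellTL σ v l) A
      rw [← hTL', ← preimage_range_inter]
      exact hTL.preimage hf hfi hA
    · change PatternIn σ (cellBL σ v l) C
      rw [← hBL', ← preimage_range_inter]
      exact hBL.preimage hf hfi hC
    · change PatternIn σ (cellTR σ v r) B
      rw [← hTR', ← preimage_range_inter]
      exact hTR.preimage hf hfi hB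
    · change PatternIn σ (cellBR σ v r) D
      rw [← hBR', ← preimage_range_inter]
      exact hBR.preimage hf hfi hD

lemma isPermClass_squintLE (hA : IsPermClass A) (hB : IsPermClass B) (hC : IsPermClass C)
    (hD : IsPermClass D) : IsPermClass (SquintLE A B C D) := by
  rintro π ⟨v, l, r, -, -, -, hlr, hTL, hBL, hTR, hBR⟩ σ ⟨f, hf, hfi⟩
  rw [PatternOn.mem_squintLE_iff ⟨f, hf, rfl, hfi⟩ hA hB hC hD]
  exact ⟨v, l, r, hlr, hTL.subset hA inter_subset_right, hBL.subset hC inter_subset_right,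
    hTR.subset hB inter_subset_right, hBR.subset hD inter_subset_right⟩

end SquintLEAt

lemma finite_setOf_card_le (N : ℕ) : {β : Perm' | β.1 ≤ N}.Finite := by
  refine ((finite_le_nat N).biUnion fun k _ => finite_range (Sigma.mk k)).subset ?_
  rintro ⟨k, e⟩ hk
  exact mem_biUnion hk ⟨e, rfl⟩

lemma finitelyBased_of_forall_exists_le {X : Set Perm'} (hX : IsPermClass X) (N : ℕ)
    (h : ∀ π ∉ X, ∃ σ ∉ X, σ.1 ≤ N ∧ Contains σ π) : FinitelyBased X := by
  refine ⟨{σ | σ.1 ≤ N ∧ σ ∉ X}, (finite_setOf_card_le N).subset fun σ hσ => hσ.1, ?_⟩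
  ext π
  refine ⟨fun hπ σ hσ hc => hσ.2 (hX π hπ σ hc), fun hπ => by_contra fun hπX => ?_⟩
  obtain ⟨σ, hσ, hσN, hc⟩ := h π hπX
  exact hπ σ ⟨hσN, hσ⟩ hc

lemma FinitelyBased.inter {X Y : Set Perm'} (hX : FinitelyBased X) (hY : FinitelyBased Y) :
    FinitelyBased (X ∩ Y) :=
  let ⟨B, hB, hXB⟩ := hX
  let ⟨B', hB', hYB'⟩ := hY
  ⟨B ∪ B', hB.union hB', by rw [hXB, hYB', av_union]⟩

lemma finitelyBased_empty : FinitelyBased ∅ :=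
  ⟨{emptyPerm}, finite_singleton _, (eq_empty_of_forall_notMem (s := Av {emptyPerm})
    fun π hπ => hπ _ rfl (contains_emptyPerm π)).symm⟩

abbrev Perm'.rev (π : Perm') : Perm' := ⟨π.1, Fin.revPerm.trans π.2⟩

namespace Perm'

lemma rev_involutive : Function.Involutive Perm'.rev := fun π =>
  Sigma.ext rfl (heq_of_eq (Equiv.ext fun i => congrArg π.2 (Fin.rev_rev i)))

lemma rev_emptyPerm : emptyPerm.rev = emptyPerm :=
  Sigma.ext rfl (heq_of_eq (Equiv.ext fun i => i.elim0))

lemma rev_perm21 : perm21.rev = perm12 :=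
  Sigma.ext rfl (heq_of_eq (Equiv.ext (by decide)))

lemma rev_perm12 : perm12.rev = perm21 := by
  rw [← rev_perm21, rev_involutive]

end Perm'

open Perm'

lemma Contains.rev {σ π : Perm'} (h : Contains σ π) : Contains σ.rev π.rev := by
  obtain ⟨f, hf, hfi⟩ := h
  refine ⟨fun i => (f i.rev).rev, fun i j hij => ?_, fun i j => ?_⟩
  · exact Fin.rev_lt_rev.mpr (hf (Fin.rev_lt_rev.mpr hij))
  · simpa only [Perm'.rev, Equiv.trans_apply, Fin.revPerm_apply, Fin.rev_rev] using hfi i.rev j.rev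

lemma av_preimage_rev (B : Set Perm') : Av (Perm'.rev ⁻¹' B) = Perm'.rev ⁻¹' Av B := by
  ext π
  refine ⟨fun h β hβ hc => h β.rev ?_ ?_, fun h β hβ hc => h β.rev hβ hc.rev⟩
  · rwa [mem_preimage, rev_involutive]
  · simpa only [rev_involutive β, rev_involutive π] using hc.rev

lemma FinitelyBased.preimage_rev {X : Set Perm'} (h : FinitelyBased X) :
    FinitelyBased (Perm'.rev ⁻¹' X) := by
  obtain ⟨B, hB, rfl⟩ := h
  exact ⟨Perm'.rev ⁻¹' B, hB.preimage rev_involutive.injective.injOn, (av_preimage_rev B).symm⟩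

lemma preimage_rev_av_perm12 : Perm'.rev ⁻¹' Av {perm12} = Av {perm21} := by
  rw [← av_preimage_rev, ← rev_perm21, ← image_singleton, rev_involutive.image_eq_preimage_symm,
    rev_involutive.preimage]

lemma preimage_rev_av_perm21 : Perm'.rev ⁻¹' Av {perm21} = Av {perm12} := by
  rw [← av_preimage_rev, ← rev_perm12, ← image_singleton, rev_involutive.image_eq_preimage_symm,
    rev_involutive.preimage]

lemma PatternIn.rev {π : Perm'} {S : Set (Fin π.1)} {T : Set (Fin π.rev.1)} {X : Set Perm'}
    (h : PatternIn π S X) (hT : ∀ i, i.rev ∈ S ↔ i ∈ T) : PatternIn π.rev T (Perm'.rev ⁻¹' X) := by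
  obtain ⟨σ, hσ, e, he, rfl, hei⟩ := h
  refine ⟨σ.rev, by rwa [mem_preimage, rev_involutive], fun i => (e i.rev).rev,
    fun i j hij => Fin.rev_lt_rev.mpr (he (Fin.rev_lt_rev.mpr hij)), ?_, fun i j => ?_⟩
  · ext x
    rw [← hT]
    exact ⟨fun ⟨i, hi⟩ => ⟨i.rev, by rw [← hi, Fin.rev_rev]⟩,
      fun ⟨i, hi⟩ => ⟨i.rev, by simp only [Fin.rev_rev, hi]⟩⟩
  · simpa only [Perm'.rev, Equiv.trans_apply, Fin.revPerm_apply, Fin.rev_rev] using hei i.rev j.rev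

section RevCells

variable {π : Perm'} {v h : ℕ}

lemma rev_mem_cellTL_iff (hv : v ≤ π.1) (i : Fin π.1) :
    i.rev ∈ cellTL π v h ↔ i ∈ cellTR π.rev (π.1 - v) h := by
  simp only [cellTL, cellTR, mem_ofPred_eq, Equiv.trans_apply, Fin.revPerm_apply,
    Fin.val_rev]
  omega

lemma rev_mem_cellBL_iff (hv : v ≤ π.1) (i : Fin π.1) :
    i.rev ∈ cellBL π v h ↔ i ∈ cellBR π.rev (π.1 - v) h := by
  simp only [cellBL, cellBR, mem_ofPred_eq, Equiv.trans_apply, Fin.revPerm_apply,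
    Fin.val_rev]
  omega

lemma rev_mem_cellTR_iff (i : Fin π.1) : i.rev ∈ cellTR π v h ↔ i ∈ cellTL π.rev (π.1 - v) h := by
  simp only [cellTL, cellTR, mem_ofPred_eq, Equiv.trans_apply, Fin.revPerm_apply,
    Fin.val_rev]
  omega

lemma rev_mem_cellBR_iff (i : Fin π.1) : i.rev ∈ cellBR π v h ↔ i ∈ cellBL π.rev (π.1 - v) h := by
  simp only [cellBL, cellBR, mem_ofPred_eq, Equiv.trans_apply, Fin.revPerm_apply,
    Fin.val_rev]
  omega

end RevCells

section RevSquint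

variable {π : Perm'} {A B C D : Set Perm'}

lemma rev_mem_squintLE (h : π ∈ SquintGE A B C D) :
    π.rev ∈ SquintLE (Perm'.rev ⁻¹' B) (Perm'.rev ⁻¹' A) (Perm'.rev ⁻¹' D) (Perm'.rev ⁻¹' C) := by
  obtain ⟨v, l, r, hv, hl, hr, hrl, hTL, hBL, hTR, hBR⟩ := h
  exact ⟨π.1 - v, r, l, Nat.sub_le _ _, hr, hl, hrl, hTR.rev (rev_mem_cellTR_iff (π := π)),
    hBR.rev (rev_mem_cellBR_iff (π := π)), hTL.rev (rev_mem_cellTL_iff hv),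
    hBL.rev (rev_mem_cellBL_iff hv)⟩

lemma rev_mem_squintGE (h : π ∈ SquintLE A B C D) :
    π.rev ∈ SquintGE (Perm'.rev ⁻¹' B) (Perm'.rev ⁻¹' A) (Perm'.rev ⁻¹' D) (Perm'.rev ⁻¹' C) := by
  obtain ⟨v, l, r, hv, hl, hr, hlr, hTL, hBL, hTR, hBR⟩ := h
  exact ⟨π.1 - v, r, l, Nat.sub_le _ _, hr, hl, hlr, hTR.rev (rev_mem_cellTR_iff (π := π)),
    hBR.rev (rev_mem_cellBR_iff (π := π)), hTL.rev (rev_mem_cellTL_iff hv),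
    hBL.rev (rev_mem_cellBL_iff hv)⟩

end RevSquint

lemma squintGE_eq_preimage_rev (A B C D : Set Perm') :
    SquintGE A B C D =
      Perm'.rev ⁻¹' SquintLE (Perm'.rev ⁻¹' B) (Perm'.rev ⁻¹' A) (Perm'.rev ⁻¹' D)
        (Perm'.rev ⁻¹' C) := by
  ext π
  refine ⟨rev_mem_squintLE, fun h => ?_⟩
  simpa only [rev_involutive π, rev_involutive.preimage _] using rev_mem_squintGE h

/-- At most `k` entries of `π` witness that no `SquintLE`-division of `π` with vertical line in
`V` works. -/
def SquintLEBlocked (π : Perm') (B₀ B₁ : Set Perm') (k : ℕ) (V : Set ℕ) : Prop :=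
  ∃ W : Finset (Fin π.1), W.card ≤ k ∧
    ∀ v ∈ V, ∀ l r, ¬ SquintLEAt π W (Av B₀) (Av B₁) (Av {perm12}) (Av {perm21}) v l r

section Blocking

variable {π : Perm'} {B₀ B₁ : Set Perm'} {c d k k' : ℕ} {V V' : Set ℕ}

lemma SquintLEBlocked.mono (h : SquintLEBlocked π B₀ B₁ k V) (hk : k ≤ k') (hV : V' ⊆ V) :
    SquintLEBlocked π B₀ B₁ k' V' :=
  let ⟨W, hW, hblock⟩ := h
  ⟨W, hW.trans hk, fun v hv => hblock v (hV hv)⟩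

lemma SquintLEBlocked.union (h : SquintLEBlocked π B₀ B₁ k V)
    (h' : SquintLEBlocked π B₀ B₁ k' V') : SquintLEBlocked π B₀ B₁ (k + k') (V ∪ V') := by
  classical
  obtain ⟨W, hW, hblock⟩ := h
  obtain ⟨W', hW', hblock'⟩ := h'
  have hcl := isPermClass_av
  refine ⟨W ∪ W', (Finset.card_union_le _ _).trans (add_le_add hW hW'), ?_⟩
  rintro v (hv | hv) l r hcut
  · exact hblock v hv l r (hcut.mono (hcl _) (hcl _) (hcl _) (hcl _) (by simp))
  · exact hblock' v hv l r (hcut.mono (hcl _) (hcl _) (hcl _) (hcl _) (by simp))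

lemma squintLEBlocked_of_copyOn {β γ : Perm'} {S T : Set (Fin π.1)} (hβ : CopyOn π β S)
    (hγ : CopyOn π γ T)
    (hblock : ∀ W : Set (Fin π.1), CopyOn π β (W ∩ S) → CopyOn π γ (W ∩ T) → ∀ v ∈ V, ∀ l r,
      ¬ SquintLEAt π W (Av B₀) (Av B₁) (Av {perm12}) (Av {perm21}) v l r) :
    SquintLEBlocked π B₀ B₁ (β.1 + γ.1) V := by
  classical
  obtain ⟨G, hG, hGβ⟩ := hβ.exists_finset
  obtain ⟨G', hG', hG'γ⟩ := hγ.exists_finset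
  refine ⟨G ∪ G', (Finset.card_union_le _ _).trans (add_le_add hG hG'), hblock _ ?_ ?_⟩
  · exact hGβ.mono (inter_subset_inter_left _ (by simp))
  · exact hG'γ.mono (inter_subset_inter_left _ (by simp))

lemma squintLEBlocked_Ici (hB₀e : emptyPerm ∈ Av B₀) (hc : ∀ β ∈ B₀, β.1 ≤ c) {v₀ : ℕ}
    (h : botLeftMax π (Av {perm12}) v₀ < topLeftMin π (Av B₀) v₀) :
    SquintLEBlocked π B₀ B₁ (c + 2) (Ici v₀) := by
  set g := botLeftMax π (Av {perm12}) v₀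
  obtain ⟨β, hβ, hcopy⟩ := exists_copyOn_of_not_patternIn
    ((patternIn_cellTL_iff (isPermClass_av B₀) hB₀e).not.mpr (not_le.mpr h))
  obtain ⟨_, rfl, hcopy12⟩ := exists_copyOn_of_not_patternIn
    ((patternIn_cellBL_iff (v := v₀) (isPermClass_av _) emptyPerm_mem_av_perm12
      (h.trans_le (topLeftMin_le_card hB₀e))).not.mpr (by omega))
  refine (squintLEBlocked_of_copyOn hcopy hcopy12 fun W hWβ hW12 v hv l r => ?_).mono
    (Nat.add_le_add_right (hc β hβ) 2) subset_rfl
  rintro ⟨-, hTL, hBL, -, -⟩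
  rcases le_or_gt l g with hl | hl
  · exact patternIn_av_iff.mp hTL β hβ
      (hWβ.mono (inter_subset_inter_right _ (cellTL_subset hv hl)))
  · exact patternIn_av_iff.mp hBL _ rfl
      (hW12.mono (inter_subset_inter_right _ (cellBL_subset hv hl)))

lemma squintLEBlocked_Iic (hB₁e : emptyPerm ∈ Av B₁) (hd : ∀ δ ∈ B₁, δ.1 ≤ d) {v₀ : ℕ}
    (h : botRightMax π (Av {perm21}) v₀ < topRightMin π (Av B₁) v₀) :
    SquintLEBlocked π B₀ B₁ (d + 2) (Iic v₀) := by
  set g := botRightMax π (Av {perm21}) v₀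
  obtain ⟨δ, hδ, hcopy⟩ := exists_copyOn_of_not_patternIn
    ((patternIn_cellTR_iff (isPermClass_av B₁) hB₁e).not.mpr (not_le.mpr h))
  obtain ⟨_, rfl, hcopy21⟩ := exists_copyOn_of_not_patternIn
    ((patternIn_cellBR_iff (v := v₀) (isPermClass_av _) emptyPerm_mem_av_perm21
      (h.trans_le (topRightMin_le_card hB₁e))).not.mpr (by omega))
  refine (squintLEBlocked_of_copyOn hcopy hcopy21 fun W hWδ hW21 v hv l r => ?_).mono
    (Nat.add_le_add_right (hd δ hδ) 2) subset_rfl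
  rintro ⟨-, -, -, hTR, hBR⟩
  rcases le_or_gt r g with hr | hr
  · exact patternIn_av_iff.mp hTR δ hδ
      (hWδ.mono (inter_subset_inter_right _ (cellTR_subset hv hr)))
  · exact patternIn_av_iff.mp hBR _ rfl
      (hW21.mono (inter_subset_inter_right _ (cellBR_subset hv hr)))

lemma exists_peak {v : ℕ} (h : botRightMax π (Av {perm21}) v < π.1) :
    ∃ a b : Fin π.1, a < b ∧ π.2 b < π.2 a ∧ v ≤ (a : ℕ) ∧
      (π.2 a : ℕ) = botRightMax π (Av {perm21}) v := by
  set g := botRightMax π (Av {perm21}) v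
  have hcl := isPermClass_av {perm21}
  obtain ⟨_, rfl, hcopy⟩ := exists_copyOn_of_not_patternIn
    ((patternIn_cellBR_iff (v := v) hcl emptyPerm_mem_av_perm21 h).not.mpr (by omega))
  obtain ⟨a, ha, b, hb, hab, hba⟩ := copyOn_perm21_iff.mp hcopy
  refine ⟨a, b, hab, hba, ha.1, (Nat.lt_succ_iff.mp ha.2).antisymm (not_lt.mp fun hlt => ?_)⟩
  have hg := (patternIn_cellBR_iff (v := v) hcl emptyPerm_mem_av_perm21 h.le).mpr le_rfl
  exact patternIn_av_iff.mp hg _ rfl (copyOn_perm21_iff.mpr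
    ⟨a, ⟨ha.1, hlt⟩, b, ⟨hb.1, (Fin.lt_def.mp hba).trans hlt⟩, hab, hba⟩)

lemma exists_squintLEBlocked_Icc (hB₀e : emptyPerm ∈ Av B₀) (hc : ∀ β ∈ B₀, β.1 ≤ c) {v₀ : ℕ}
    (h : botRightMax π (Av {perm21}) v₀ < topLeftMin π (Av B₀) v₀) :
    ∃ a : Fin π.1, v₀ ≤ (a : ℕ) ∧ (π.2 a : ℕ) = botRightMax π (Av {perm21}) v₀ ∧
      SquintLEBlocked π B₀ B₁ (c + 2) (Icc v₀ a) := by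
  set g := botRightMax π (Av {perm21}) v₀
  obtain ⟨β, hβ, hcopy⟩ := exists_copyOn_of_not_patternIn
    ((patternIn_cellTL_iff (isPermClass_av B₀) hB₀e).not.mpr (not_le.mpr h))
  obtain ⟨a, b, hab, hba, hv₀a, hag⟩ := exists_peak (h.trans_le (topLeftMin_le_card hB₀e))
  have hcopy21 : CopyOn π perm21 (cellBR π a (g + 1)) :=
    copyOn_perm21_iff.mpr ⟨a, ⟨le_rfl, by omega⟩, b, ⟨hab.le, by omega⟩, hab, hba⟩
  refine ⟨a, hv₀a, hag, (squintLEBlocked_of_copyOn hcopy hcopy21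
    fun W hWβ hW21 v hv l r => ?_).mono (Nat.add_le_add_right (hc β hβ) 2) subset_rfl⟩
  rintro ⟨hlr, hTL, -, -, hBR⟩
  rcases le_or_gt r g with hr | hr
  · exact patternIn_av_iff.mp hTL β hβ
      (hWβ.mono (inter_subset_inter_right _ (cellTL_subset hv.1 (hlr.trans hr))))
  · exact patternIn_av_iff.mp hBR _ rfl
      (hW21.mono (inter_subset_inter_right _ (cellBR_subset hv.2 hr)))

/-- Two middle gadgets cover the band `[q, p]`: the first one, placed at `q`, reaches its peak
`a₁`, and the second one, placed at `a₁ + 1`, reaches beyond `p`. -/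
lemma squintLEBlocked_Icc (hB₀e : emptyPerm ∈ Av B₀) (hc : ∀ β ∈ B₀, β.1 ≤ c) {q p : ℕ}
    (hqp : q ≤ p) (hband : ∀ v, q ≤ v → v ≤ p →
      botRightMax π (Av {perm21}) v < topLeftMin π (Av B₀) v)
    (hp : topLeftMin π (Av B₀) p ≤ botLeftMax π (Av {perm12}) p) :
    SquintLEBlocked π B₀ B₁ (2 * (c + 2)) (Icc q p) := by
  have hbR := botRightMax_mono (π := π) (isPermClass_av {perm21}) emptyPerm_mem_av_perm21
  obtain ⟨a₁, hqa₁, ha₁, hW₁⟩ := exists_squintLEBlocked_Icc (B₁ := B₁) hB₀e hc (hband q le_rfl hqp)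
  by_cases hpa₁ : p ≤ a₁
  · exact hW₁.mono (by omega) (Icc_subset_Icc le_rfl hpa₁)
  obtain ⟨a₂, ha₁a₂, ha₂, hW₂⟩ :=
    exists_squintLEBlocked_Icc (B₁ := B₁) hB₀e hc (hband (a₁ + 1) (by omega) (by omega))
  have hpa₂ : p ≤ a₂ := by
    by_contra! ha₂p
    -- otherwise the peaks `a₁ < a₂` form a `12` in the bottom-left cell at `p`, which is decreasing
    have hp' := hband p hqp le_rfl
    have hpn := hp'.trans_le (topLeftMin_le_card hB₀e)
    obtain ⟨a₃, -, -, -, hpa₃, ha₃⟩ := exists_peak hpn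
    have h₁₂ : (π.2 a₁ : ℕ) < π.2 a₂ := by
      refine (ha₁.trans_le ((hbR (by omega : q ≤ (a₁ : ℕ) + 1)).trans ha₂.ge)).lt_of_ne ?_
      exact fun h => (show a₁ ≠ a₂ by omega) (π.2.injective (Fin.ext h))
    have h₂₃ : (π.2 a₂ : ℕ) < botRightMax π (Av {perm21}) p := by
      refine (ha₂.trans_le (hbR (by omega : (a₁ : ℕ) + 1 ≤ p))).lt_of_ne ?_
      exact fun h => (show a₂ ≠ a₃ by omega) (π.2.injective (Fin.ext (h.trans ha₃.symm)))
    have hBL := (patternIn_cellBL_iff (v := p) (isPermClass_av {perm12}) emptyPerm_mem_av_perm12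
      hpn.le).mpr (hp'.le.trans hp)
    exact patternIn_av_iff.mp hBL _ rfl (copyOn_perm12_iff.mpr
      ⟨a₁, ⟨by omega, by omega⟩, a₂, ⟨ha₂p, h₂₃⟩, Fin.lt_def.mpr (by omega), Fin.lt_def.mpr h₁₂⟩)
  refine (hW₁.union hW₂).mono (by omega) fun v hv => ?_
  simp only [mem_union, mem_Icc] at hv ⊢
  omega

lemma exists_lines_of_not_mem_squintLE (hB₀e : emptyPerm ∈ Av B₀) (hB₁e : emptyPerm ∈ Av B₁)
    (hπ : π ∉ SquintLE (Av B₀) (Av B₁) (Av {perm12}) (Av {perm21})) :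
    ∃ p q : ℕ, botLeftMax π (Av {perm12}) (p + 1) < topLeftMin π (Av B₀) (p + 1) ∧
      botRightMax π (Av {perm21}) (q - 1) < topRightMin π (Av B₁) (q - 1) ∧
      topLeftMin π (Av B₀) p ≤ botLeftMax π (Av {perm12}) p ∧
      ∀ v, q ≤ v → v ≤ p → botRightMax π (Av {perm21}) v < topLeftMin π (Av B₀) v := by
  have hcl := isPermClass_av
  set tL := topLeftMin π (Av B₀)
  set tR := topRightMin π (Av B₁)
  set bL := botLeftMax π (Av {perm12})
  set bR := botRightMax π (Av {perm21})
  have htL : Monotone tL := topLeftMin_mono (hcl _) hB₀e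
  have htR : Antitone tR := topRightMin_anti (hcl _) hB₁e
  have hbL : Antitone bL := botLeftMax_anti (hcl _) emptyPerm_mem_av_perm12
  have hbR : Monotone bR := botRightMax_mono (hcl _) emptyPerm_mem_av_perm21
  have hnot : ∀ v ≤ π.1, tL v ≤ bL v → tR v ≤ bR v → bR v < tL v := fun v hv h₁ h₂ =>
    not_le.mp fun h₃ => hπ ((mem_squintLE_iff (hcl _) hB₀e (hcl _) hB₁e (hcl _)
      emptyPerm_mem_av_perm12 (hcl _) emptyPerm_mem_av_perm21).mpr ⟨v, hv, h₁, h₂, h₃⟩)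
  -- the left column can be split exactly on the lines `v ≤ p`, the right one on the lines `q ≤ v`
  set p := sSup {v | v ≤ π.1 ∧ tL v ≤ bL v}
  set q := sInf {v | tR v ≤ bR v}
  have htL₀ : tL 0 = 0 := topLeftMin_zero (hcl _) hB₀e
  have htRn : tR π.1 = 0 := topRightMin_card (hcl _) hB₁e
  have hbRn : bR π.1 = π.1 := botRightMax_card (hcl _) emptyPerm_mem_av_perm21
  have hP : ∀ v ≤ π.1, v ≤ p ↔ tL v ≤ bL v := fun v hv =>
    le_sSup_iff_of_antitone (P := fun v => tL v ≤ bL v)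
      (fun _ _ hab h => (htL hab).trans (h.trans (hbL hab))) (by simp [htL₀]) hv
  have hQ : ∀ v, q ≤ v ↔ tR v ≤ bR v := fun v =>
    sInf_le_iff_of_monotone (P := fun v => tR v ≤ bR v)
      (fun _ _ hab h => (htR hab).trans (h.trans (hbR hab))) ⟨π.1, by simp [htRn]⟩
  have hpn : p < π.1 := by
    refine lt_of_le_of_ne (csSup_le' fun _ hv => hv.1) fun hpn => ?_
    have htLn : tL π.1 ≤ π.1 := topLeftMin_le_card hB₀e
    have := hnot π.1 le_rfl ((hP _ le_rfl).mp hpn.ge) (by simp [htRn])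
    omega
  have hq : 0 < q := Nat.pos_of_ne_zero fun hq =>
    absurd (hnot 0 (Nat.zero_le _) (by simp [htL₀]) ((hQ 0).mp hq.le)) (by simp [htL₀])
  refine ⟨p, q, not_le.mp fun h => ?_, not_le.mp fun h => ?_, (hP p hpn.le).mp le_rfl,
    fun v hqv hvp => hnot v (by omega) ((hP v (by omega)).mp hvp) ((hQ v).mp hqv)⟩
  · have := (hP (p + 1) hpn).mpr h
    omega
  · have := (hQ (q - 1)).mpr h
    omega

lemma squintLEBlocked_univ (hB₀e : emptyPerm ∈ Av B₀) (hB₁e : emptyPerm ∈ Av B₁)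
    (hc : ∀ β ∈ B₀, β.1 ≤ c) (hd : ∀ δ ∈ B₁, δ.1 ≤ d)
    (hπ : π ∉ SquintLE (Av B₀) (Av B₁) (Av {perm12}) (Av {perm21})) :
    SquintLEBlocked π B₀ B₁ (4 * (c + d + 2)) univ := by
  obtain ⟨p, q, hp₁, hq₁, hp, hband⟩ := exists_lines_of_not_mem_squintLE hB₀e hB₁e hπ
  have hleft := squintLEBlocked_Ici (B₁ := B₁) hB₀e hc hp₁
  have hright := squintLEBlocked_Iic (B₀ := B₀) hB₁e hd hq₁
  rcases lt_or_ge p q with hpq | hqp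
  · refine (hleft.union hright).mono (by omega) fun v _ => ?_
    simp only [mem_union, mem_Ici, mem_Iic]
    omega
  · refine ((hleft.union hright).union (squintLEBlocked_Icc hB₀e hc hqp hband hp)).mono
      (by omega) fun v _ => ?_
    simp only [mem_union, mem_Ici, mem_Iic, mem_Icc]
    omega

end Blocking

lemma finitelyBased_squintLE {B₀ B₁ : Set Perm'} (hB₀ : B₀.Finite) (hB₁ : B₁.Finite)
    (hB₀e : emptyPerm ∈ Av B₀) (hB₁e : emptyPerm ∈ Av B₁) :
    FinitelyBased (SquintLE (Av B₀) (Av B₁) (Av {perm12}) (Av {perm21})) := by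
  have hcl := isPermClass_av
  obtain ⟨c, hc⟩ := (hB₀.image Sigma.fst).bddAbove
  obtain ⟨d, hd⟩ := (hB₁.image Sigma.fst).bddAbove
  refine finitelyBased_of_forall_exists_le (isPermClass_squintLE (hcl _) (hcl _) (hcl _) (hcl _))
    (4 * (c + d + 2)) fun π hπ => ?_
  obtain ⟨W, hWcard, hW⟩ := squintLEBlocked_univ hB₀e hB₁e
    (fun β hβ => hc (mem_image_of_mem _ hβ)) (fun δ hδ => hd (mem_image_of_mem _ hδ)) hπ
  obtain ⟨σ, hσ, hWσ⟩ := exists_patternOn π W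
  refine ⟨σ, fun hσS => ?_, by rw [hσ, ncard_coe_finset]; exact hWcard, hWσ.contains⟩
  obtain ⟨v, l, r, h⟩ := (hWσ.mem_squintLE_iff (hcl _) (hcl _) (hcl _) (hcl _)).mp hσS
  exact hW v trivial l r h

lemma gridClass_empty_left (B C D : Set Perm') : GridClass ∅ B C D = ∅ :=
  eq_empty_of_forall_notMem fun _ ⟨_, _, _, _, ⟨_, h, _⟩, _⟩ => h

lemma gridClass_empty_right (A C D : Set Perm') : GridClass A ∅ C D = ∅ :=
  eq_empty_of_forall_notMem fun _ ⟨_, _, _, _, _, ⟨_, h, _⟩, _⟩ => h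

theorem grid2x2_decr_incr_finitelyBased_general (C D : Set Perm')
    (hCfb : FinitelyBased C) (hDfb : FinitelyBased D) :
    FinitelyBased (GridClass C D (Av {perm12}) (Av {perm21})) := by
  obtain ⟨B₀, hB₀, rfl⟩ := hCfb
  obtain ⟨B₁, hB₁, rfl⟩ := hDfb
  have hcl := isPermClass_av
  by_cases hB₀e : emptyPerm ∈ Av B₀
  swap
  · rw [(hcl B₀).eq_empty hB₀e, gridClass_empty_left]
    exact finitelyBased_empty
  by_cases hB₁e : emptyPerm ∈ Av B₁
  swap
  · rw [(hcl B₁).eq_empty hB₁e, gridClass_empty_right]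
    exact finitelyBased_empty
  have hrevB₀e : emptyPerm ∈ Av (Perm'.rev ⁻¹' B₀) := by
    rwa [av_preimage_rev, mem_preimage, rev_emptyPerm]
  have hrevB₁e : emptyPerm ∈ Av (Perm'.rev ⁻¹' B₁) := by
    rwa [av_preimage_rev, mem_preimage, rev_emptyPerm]
  rw [gridClass_eq_squintLE_inter_squintGE (hcl _) hB₀e (hcl _) hB₁e (hcl _)
    emptyPerm_mem_av_perm12 (hcl _) emptyPerm_mem_av_perm21, squintGE_eq_preimage_rev,
    preimage_rev_av_perm12, preimage_rev_av_perm21, ← av_preimage_rev, ← av_preimage_rev]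
  exact (finitelyBased_squintLE hB₀ hB₁ hB₀e hB₁e).inter
    (finitelyBased_squintLE (hB₁.preimage rev_involutive.injective.injOn)
      (hB₀.preimage rev_involutive.injective.injOn) hrevB₁e hrevB₀e).preimage_rev

/-- For finitely based permutation classes `C`, `D`, the grid class
`Grid(C,D;Av 12,Av 21)` is finitely based. -/
theorem grid2x2_decr_incr_finitelyBased (C D : Set Perm')
    (hC : IsPermClass C) (hD : IsPermClass D)
    (hCfb : FinitelyBased C) (hDfb : FinitelyBased D) :
    FinitelyBased (GridClass C D (Av {perm12}) (Av {perm21})) :=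
  grid2x2_decr_incr_finitelyBased_general C D hCfb hDfb
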